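/- arXiv:1610.00478 — 2 statements merged into one kernel-verified Lean document; each statement's English description precedes it below -/
import Mathlib

section
/- Let a > 0, b ∈ (0, a), D, E ≥ 0 and let x : (0,∞) → [0,∞) satisfy, for some fixed t > 0 and all k ∈ ℕ, x(t/2^k) ≤ x(t/2^{k+1})/2^a + 2^{b(k+1)}·D·t^{-b} + E, and suppose x is bounded on (0,t]. Then x(t) ≤ (2^b/(1 - 2^{b-a}))·D·t^{-b} + E/(1 - 2^{-a}). -/
/-!
Write `u k = x (t / 2 ^ k)`. The recursion reads `u k ≤ q * u (k + 1) + c k` with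
`q = 2 ^ (-a) < 1`; unrolling it `n` times gives `u 0 ≤ q ^ n * u n + ∑ k < n, q ^ k * c k`.
Boundedness of `x` on `(0, t]` kills the first term as `n → ∞`, and the series is the sum of
two geometric series, of ratios `2 ^ (b - a)` and `2 ^ (-a)`.
-/

open Real Filter Finset

section Unrolling

variable {u c : ℕ → ℝ} {q : ℝ}

theorem le_pow_mul_add_sum_of_le_mul_succ_add (hq : 0 ≤ q)
    (hu : ∀ k, u k ≤ q * u (k + 1) + c k) (n : ℕ) :
    u 0 ≤ q ^ n * u n + ∑ k ∈ range n, q ^ k * c k := by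
  induction n with
  | zero => simp
  | succ n ih =>
    have step : q ^ n * u n ≤ q ^ n * (q * u (n + 1) + c n) :=
      mul_le_mul_of_nonneg_left (hu n) (pow_nonneg hq n)
    calc u 0 ≤ q ^ n * u n + ∑ k ∈ range n, q ^ k * c k := ih
      _ ≤ q ^ n * (q * u (n + 1) + c n) + ∑ k ∈ range n, q ^ k * c k := by gcongr
      _ = q ^ (n + 1) * u (n + 1) + ∑ k ∈ range (n + 1), q ^ k * c k := by
        rw [sum_range_succ, pow_succ]; ring

theorem le_of_hasSum_of_le_mul_succ_add {B S : ℝ} (hq0 : 0 ≤ q) (hq1 : q < 1)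
    (hB : ∀ k, u k ≤ B) (hS : HasSum (fun k ↦ q ^ k * c k) S)
    (hu : ∀ k, u k ≤ q * u (k + 1) + c k) : u 0 ≤ S := by
  have bound : ∀ n, u 0 ≤ q ^ n * B + ∑ k ∈ range n, q ^ k * c k := fun n ↦
    (le_pow_mul_add_sum_of_le_mul_succ_add hq0 hu n).trans <| by
      gcongr
      exact hB n
  have lim :
      Tendsto (fun n ↦ q ^ n * B + ∑ k ∈ range n, q ^ k * c k) atTop (nhds (0 * B + S)) :=
    ((tendsto_pow_atTop_nhds_zero_of_lt_one hq0 hq1).mul_const B).add hS.tendsto_sum_nat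
  simpa using ge_of_tendsto' lim bound

end Unrolling

theorem two_rpow_neg_pow_mul_two_rpow_mul_succ (a b : ℝ) (k : ℕ) :
    ((2 : ℝ) ^ (-a)) ^ k * 2 ^ (b * (k + 1)) = 2 ^ b * (2 ^ (b - a)) ^ k := by
  rw [← rpow_natCast, ← rpow_natCast, ← rpow_mul zero_le_two, ← rpow_mul zero_le_two,
    ← rpow_add two_pos, ← rpow_add two_pos]
  ring_nf

theorem hasSum_two_rpow_neg_pow_mul {a b : ℝ} (ha : 0 < a) (hba : b < a) (K E : ℝ) :
    HasSum (fun k : ℕ ↦ ((2 : ℝ) ^ (-a)) ^ k * (2 ^ (b * (k + 1)) * K + E))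
      (2 ^ b / (1 - 2 ^ (b - a)) * K + E / (1 - 2 ^ (-a))) := by
  have geom : ∀ r : ℝ, r < 0 → HasSum (fun k : ℕ ↦ ((2 : ℝ) ^ r) ^ k) (1 - 2 ^ r)⁻¹ :=
    fun r hr ↦
    hasSum_geometric_of_lt_one (rpow_nonneg zero_le_two r)
      (rpow_lt_one_of_one_lt_of_neg one_lt_two hr)
  have terms : (fun k : ℕ ↦ ((2 : ℝ) ^ (-a)) ^ k * (2 ^ (b * (k + 1)) * K + E)) =
      fun k ↦ 2 ^ b * K * ((2 : ℝ) ^ (b - a)) ^ k + E * ((2 : ℝ) ^ (-a)) ^ k := by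
    ext k
    rw [mul_add, ← mul_assoc, two_rpow_neg_pow_mul_two_rpow_mul_succ]
    ring
  rw [terms, div_eq_mul_inv, div_eq_mul_inv, mul_right_comm]
  exact ((geom (b - a) (by linarith)).mul_left (2 ^ b * K)).add
    ((geom (-a) (by linarith)).mul_left E)

theorem dyadic_shift_iteration_general (a b D E t : ℝ) (x : ℝ → ℝ)
    (ha : 0 < a) (hba : b < a) (ht : 0 < t)
    (hbdd : ∃ B : ℝ, ∀ s : ℝ, 0 < s → s ≤ t → x s ≤ B)
    (hrec : ∀ k : ℕ, x (t / 2 ^ k) ≤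
      x (t / 2 ^ (k + 1)) / 2 ^ a + 2 ^ (b * (k + 1)) * D * t ^ (-b) + E) :
    x t ≤ (2 ^ b / (1 - 2 ^ (b - a))) * D * t ^ (-b) + E / (1 - 2 ^ (-a)) := by
  obtain ⟨B, hB⟩ := hbdd
  have hu : ∀ k : ℕ, x (t / 2 ^ k) ≤
      2 ^ (-a) * x (t / 2 ^ (k + 1)) + (2 ^ (b * (k + 1)) * (D * t ^ (-b)) + E) := fun k ↦
    (hrec k).trans_eq <| by rw [rpow_neg zero_le_two, div_eq_inv_mul]; ring
  have key := le_of_hasSum_of_le_mul_succ_add (rpow_nonneg zero_le_two _)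
    (rpow_lt_one_of_one_lt_of_neg one_lt_two (neg_lt_zero.mpr ha))
    (fun k ↦ hB _ (by positivity) (div_le_self ht.le (one_le_pow₀ one_le_two)))
    (hasSum_two_rpow_neg_pow_mul ha hba (D * t ^ (-b)) E) hu
  rw [pow_zero, div_one] at key
  linarith

theorem dyadic_shift_iteration (a b D E t : ℝ) (x : ℝ → ℝ)
    (ha : 0 < a) (hb0 : 0 < b) (hba : b < a) (hD : 0 ≤ D) (hE : 0 ≤ E) (ht : 0 < t)
    (hxnonneg : ∀ s : ℝ, 0 < s → 0 ≤ x s)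
    (hbdd : ∃ B : ℝ, ∀ s : ℝ, 0 < s → s ≤ t → x s ≤ B)
    (hrec : ∀ k : ℕ, x (t / 2 ^ k) ≤
      x (t / 2 ^ (k + 1)) / 2 ^ a + 2 ^ (b * (k + 1)) * D * t ^ (-b) + E) :
    x t ≤ (2 ^ b / (1 - 2 ^ (b - a))) * D * t ^ (-b) + E / (1 - 2 ^ (-a)) :=
  dyadic_shift_iteration_general a b D E t x ha hba ht hbdd hrec
end

section
/- For p ≥ 2 and m > 1, define Φ_p(y) = ∫₀^y |r|^{p/2 - 1}|r+1|^{(m-1)/2} dr for y ∈ ℝ. Then for every R > 1 and all y ∈ [-R, R], one has |Φ_p(y)| ≤ ((R+1)^{(m-1)/2}/p)·|y|^{p/2}·2, and there exists a constant C̃ > 0 depending only on m such that |Φ_p(y)| ≥ (C̃/p^{1 + max(1,(m-1)/2)})·|y|^{p/2}. -/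
/-!
Write `q = p/2 - 1` and `c = (m-1)/2`. The integrand `|r|^q |r+1|^c` is nonnegative, so `|Φ_p(y)|`
is its integral over the segment between `0` and `y`. On that segment `|r+1| ≤ R + 1`, and
`∫ |r|^q` over it is `|y|^{p/2} / (p/2)`; this is the upper bound.

For the lower bound, take the end piece of the segment of length `|y|/p`. There
`|r|^q ≥ (1 - 1/p)^q |y|^q ≥ |y|^q / 2` by Bernoulli's inequality. The only zero of `|r+1|` is
`-1`, and some quarter of the end piece stays at distance `≥ |y|/(4p)` from it; as also
`|r+1| ≥ 1 - |y|`, we get `|r+1| ≥ 1/(8p)` on that quarter, whatever the size of `|y|`. Hence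
`|Φ_p(y)| ≥ |y|^q/2 · (8p)^{-c} · |y|/(4p) = |y|^{p/2} / (8 · 8^c · p^{1+c})`.
-/

open Real

/-- `Φ_p(y) = ∫₀^y |r|^{p/2-1} |r+1|^{(m-1)/2} dr`. -/
noncomputable def PhiP (m p y : ℝ) : ℝ :=
  ∫ r in (0:ℝ)..y, |r| ^ (p / 2 - 1) * |r + 1| ^ ((m - 1) / 2)

open Set Filter MeasureTheory intervalIntegral
open scoped Interval

lemma continuous_abs_rpow_mul_abs_add_one_rpow {q c : ℝ} (hq : 0 ≤ q) (hc : 0 ≤ c) :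
    Continuous fun r : ℝ => |r| ^ q * |r + 1| ^ c :=
  (continuous_abs.rpow_const fun _ => Or.inr hq).mul
    ((continuous_id.add continuous_const).abs.rpow_const fun _ => Or.inr hc)

lemma mul_sub_le_abs_integral_of_Icc_subset_uIcc {f : ℝ → ℝ} (hf : Continuous f)
    (hf0 : ∀ x, 0 ≤ f x) {a b u v L : ℝ} (huv : u ≤ v) (hsub : Icc u v ⊆ [[a, b]])
    (hL : ∀ x ∈ Icc u v, L ≤ f x) :
    L * (v - u) ≤ |∫ x in a..b, f x| := by
  have hIoc : Ioc u v ⊆ Ι a b := fun x hx =>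
    ⟨(hsub (left_mem_Icc.2 huv)).1.trans_lt hx.1, (hsub ⟨hx.1.le, hx.2⟩).2⟩
  calc L * (v - u) ≤ ∫ x in u..v, f x := by
        simpa [mul_comm] using integral_mono_on (μ := volume) huv intervalIntegrable_const
          (hf.intervalIntegrable u v) hL
    _ = ∫ x in Ioc u v, f x := integral_of_le huv
    _ ≤ ∫ x in Ι a b, f x := setIntegral_mono_set hf.integrableOn_uIoc
        (ae_of_all _ fun x => hf0 x) (Eventually.of_forall hIoc)
    _ ≤ |∫ x in a..b, f x| := by rw [abs_integral_eq_abs_integral_uIoc]; exact le_abs_self _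

lemma abs_integral_abs_rpow {q : ℝ} (hq : 0 ≤ q) (y : ℝ) :
    |∫ r in (0 : ℝ)..y, |r| ^ q| = |y| ^ (q + 1) / (q + 1) := by
  have hpos (t : ℝ) (ht : 0 ≤ t) : ∫ r in (0 : ℝ)..t, |r| ^ q = t ^ (q + 1) / (q + 1) := by
    rw [integral_congr fun r hr => by rw [abs_of_nonneg (uIcc_of_le ht ▸ hr).1],
      integral_rpow (Or.inl (by linarith)), zero_rpow (by positivity), sub_zero]
  rcases le_total 0 y with hy | hy
  · rw [hpos y hy, abs_of_nonneg hy, abs_of_nonneg (by positivity)]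
  · have hneg := integral_comp_neg (a := y) (b := 0) fun r : ℝ => |r| ^ q
    simp only [abs_neg, neg_zero] at hneg
    rw [integral_symm, hneg, abs_neg, hpos (-y) (by linarith),
      abs_of_nonneg (div_nonneg (rpow_nonneg (by linarith) _) (by linarith)), abs_of_nonpos hy]

lemma abs_PhiP_le {m p R y : ℝ} (hm : 1 ≤ m) (hp : 2 ≤ p) (hy : |y| ≤ R) :
    |PhiP m p y| ≤ (R + 1) ^ ((m - 1) / 2) / p * |y| ^ (p / 2) * 2 := by
  have hq : 0 ≤ p / 2 - 1 := by linarith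
  have hc : 0 ≤ (m - 1) / 2 := by linarith
  have hbound : ∀ r ∈ Ι 0 y, ‖|r| ^ (p / 2 - 1) * |r + 1| ^ ((m - 1) / 2)‖
      ≤ (R + 1) ^ ((m - 1) / 2) * |r| ^ (p / 2 - 1) := by
    intro r hr
    have hrR : |r| ≤ R := by
      simpa using (abs_sub_left_of_mem_uIcc (uIoc_subset_uIcc hr)).trans (by simpa using hy)
    rw [Real.norm_eq_abs, abs_of_nonneg (by positivity), mul_comm]
    gcongr
    exact (abs_add_le r 1).trans (by rw [abs_one]; linarith)
  calc |PhiP m p y|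
      ≤ |∫ r in (0 : ℝ)..y, (R + 1) ^ ((m - 1) / 2) * |r| ^ (p / 2 - 1)| :=
        norm_integral_le_abs_of_norm_le
          ((ae_restrict_iff' measurableSet_uIoc).2 (ae_of_all _ hbound))
          ((continuous_const.mul (continuous_abs.rpow_const fun _ => Or.inr hq)).intervalIntegrable
            _ _)
    _ = (R + 1) ^ ((m - 1) / 2) * (|y| ^ (p / 2) / (p / 2)) := by
        rw [intervalIntegral.integral_const_mul, abs_mul, abs_integral_abs_rpow hq, sub_add_cancel,
          abs_of_nonneg (rpow_nonneg (by linarith [abs_nonneg y]) _)]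
    _ = _ := by field_simp

lemma exists_Icc_subset_uIcc_zero {y d : ℝ} (hd : d ≤ |y|) :
    ∃ a, Icc a (a + d) ⊆ [[0, y]] ∧ ∀ x ∈ Icc a (a + d), |y| - d ≤ |x| := by
  rcases le_total 0 y with hy | hy
  · rw [abs_of_nonneg hy] at hd ⊢
    refine ⟨y - d, ?_, fun x hx => by linarith [hx.1, le_abs_self x]⟩
    rw [uIcc_of_le hy]
    exact Icc_subset_Icc (by linarith) (by linarith)
  · rw [abs_of_nonpos hy] at hd ⊢
    refine ⟨y, ?_, fun x hx => by linarith [hx.2, neg_le_abs x]⟩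
    rw [uIcc_of_ge hy]
    exact Icc_subset_Icc le_rfl (by linarith)

lemma exists_Icc_subset_Icc_le_abs_sub (a z : ℝ) {d : ℝ} (hd : 0 ≤ d) :
    ∃ u, Icc u (u + d / 4) ⊆ Icc a (a + d) ∧
      ∀ x ∈ Icc u (u + d / 4), d / 4 ≤ |x - z| := by
  rcases le_total (a + d / 2) z with hz | hz
  · refine ⟨a, Icc_subset_Icc le_rfl (by linarith), fun x hx => ?_⟩
    rw [abs_sub_comm]
    exact le_abs.2 (Or.inl (by linarith [hx.2]))
  · refine ⟨a + 3 * d / 4, Icc_subset_Icc (by linarith) (by linarith), fun x hx => ?_⟩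
    exact le_abs.2 (Or.inl (by linarith [hx.1]))

lemma half_le_one_sub_inv_rpow {p : ℝ} (hp : 2 ≤ p) : 1 / 2 ≤ (1 - p⁻¹) ^ (p / 2 - 1) := by
  have hinv : p⁻¹ ≤ 1 / 2 := by rw [inv_le_comm₀ (by linarith) (by norm_num)]; linarith
  have hinv0 : 0 < p⁻¹ := by positivity
  calc (1 : ℝ) / 2 = 1 + p / 2 * -p⁻¹ := by field_simp; ring
    _ ≤ (1 + -p⁻¹) ^ (p / 2) := one_add_mul_self_le_rpow_one_add (by linarith) (by linarith)
    _ ≤ (1 - p⁻¹) ^ (p / 2 - 1) :=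
        rpow_le_rpow_of_exponent_ge (by linarith) (by linarith) (by linarith)

lemma half_rpow_le_rpow_of_sub_div_le {p t s : ℝ} (hp : 2 ≤ p) (ht : 0 ≤ t)
    (hs : t - t / p ≤ s) : t ^ (p / 2 - 1) / 2 ≤ s ^ (p / 2 - 1) := by
  have hp1 : 0 ≤ 1 - p⁻¹ := sub_nonneg.2 (inv_le_one_of_one_le₀ (by linarith))
  calc t ^ (p / 2 - 1) / 2 ≤ t ^ (p / 2 - 1) * (1 - p⁻¹) ^ (p / 2 - 1) := by
        nlinarith [half_le_one_sub_inv_rpow hp, rpow_nonneg ht (p / 2 - 1)]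
    _ = (t * (1 - p⁻¹)) ^ (p / 2 - 1) := (mul_rpow ht hp1).symm
    _ ≤ s ^ (p / 2 - 1) :=
        rpow_le_rpow (mul_nonneg ht hp1) (by rw [div_eq_mul_inv] at hs; linarith) (by linarith)

lemma inv_le_abs_add_one {p t x : ℝ} (hp : 1 / 4 ≤ p) (hx : |x| ≤ t)
    (hfar : t / p / 4 ≤ |x + 1|) : (8 * p)⁻¹ ≤ |x + 1| := by
  have hp0 : 0 < p := by linarith
  rcases le_total t (1 / 2) with ht | ht
  · calc (8 * p)⁻¹ ≤ 1 / 2 := by rw [inv_le_comm₀ (by positivity) (by norm_num)]; linarith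
      _ ≤ 1 - |x| := by linarith
      _ ≤ |x + 1| := le_abs.2 (Or.inl (by linarith [neg_abs_le x]))
  · calc (8 * p)⁻¹ = 1 / 2 / p / 4 := by field_simp; ring
      _ ≤ t / p / 4 := by gcongr
      _ ≤ |x + 1| := hfar

lemma le_abs_PhiP {m p : ℝ} (hm : 1 ≤ m) (hp : 2 ≤ p) (y : ℝ) :
    (8 * 8 ^ ((m - 1) / 2))⁻¹ / p ^ (1 + (m - 1) / 2) * |y| ^ (p / 2) ≤ |PhiP m p y| := by
  have hq : 0 ≤ p / 2 - 1 := by linarith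
  have hc : 0 ≤ (m - 1) / 2 := by linarith
  have hp0 : 0 < p := by linarith
  set q := p / 2 - 1 with hq_def
  set c := (m - 1) / 2
  set t := |y|
  have ht : 0 ≤ t := abs_nonneg y
  have hd : 0 ≤ t / p := by positivity
  obtain ⟨a, hsub, hend⟩ :=
    exists_Icc_subset_uIcc_zero (div_le_self ht (by linarith) : t / p ≤ t)
  obtain ⟨u, hsub', hfar⟩ := exists_Icc_subset_Icc_le_abs_sub a (-1) hd
  have hL : ∀ x ∈ Icc u (u + t / p / 4),
      t ^ q / 2 * (8 * p)⁻¹ ^ c ≤ |x| ^ q * |x + 1| ^ c := by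
    intro x hx
    have hxt : |x| ≤ t := by simpa using abs_sub_left_of_mem_uIcc (hsub (hsub' hx))
    have hx1 : (8 * p)⁻¹ ≤ |x + 1| :=
      inv_le_abs_add_one (by linarith) hxt (by simpa using hfar x hx)
    exact mul_le_mul (half_rpow_le_rpow_of_sub_div_le hp ht (hend x (hsub' hx)))
      (rpow_le_rpow (by positivity) hx1 hc) (by positivity) (by positivity)
  calc (8 * 8 ^ c)⁻¹ / p ^ (1 + c) * t ^ (p / 2)
      = t ^ q / 2 * (8 * p)⁻¹ ^ c * (u + t / p / 4 - u) := by
        rw [show p / 2 = q + 1 by rw [hq_def]; ring, rpow_add_one' ht (by linarith), rpow_add hp0,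
          rpow_one, inv_rpow (by positivity), mul_rpow (by norm_num) hp0.le]
        field_simp
        ring
    _ ≤ |PhiP m p y| := mul_sub_le_abs_integral_of_Icc_subset_uIcc
        (continuous_abs_rpow_mul_abs_add_one_rpow hq hc) (fun x => by positivity)
        (le_add_of_nonneg_right (by positivity)) (hsub'.trans hsub) hL

theorem PhiP_two_sided_bounds (m : ℝ) (hm : 1 < m) :
    (∀ p : ℝ, 2 ≤ p → ∀ R : ℝ, 1 < R → ∀ y : ℝ, |y| ≤ R →
      |PhiP m p y| ≤ (R + 1) ^ ((m - 1) / 2) / p * |y| ^ (p / 2) * 2) ∧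
    (∃ C : ℝ, 0 < C ∧ ∀ p : ℝ, 2 ≤ p → ∀ R : ℝ, 1 < R → ∀ y : ℝ, |y| ≤ R →
      C / p ^ (1 + max 1 ((m - 1) / 2)) * |y| ^ (p / 2) ≤ |PhiP m p y|) := by
  refine ⟨fun p hp R _ y hy => abs_PhiP_le hm.le hp hy,
    (8 * 8 ^ ((m - 1) / 2))⁻¹, by positivity, fun p hp R _ y _ => ?_⟩
  refine le_trans ?_ (le_abs_PhiP hm.le hp y)
  gcongr
  · linarith
  · exact le_max_right _ _
end
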